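/- As formal power series in ℤ⟦q⟧, Σ_{n≥0} p(n) q^n ≡ f(q) (mod 4), i.e. every coefficient of the partition generating function is congruent modulo 4 to the corresponding coefficient of Ramanujan's third order mock theta function f(q). -/

import Mathlib

/-!
Modulo 4 we have `(1 + q^j)^2 = (1 - q^j)^2 + 4q^j ≡ (1 - q^j)^2`, so the `k`-th summand of `f(q)`
is congruent to `q^{k²} ∏_{j ≤ k} (1 - q^j)^{-2}`. This is the generating function of the
partitions whose Durfee square has side `k`: removing the `k × k` square leaves a partition into at
most `k` parts to its right and a partition into parts `≤ k` below it, and conjugation turns the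
former into a partition into parts `≤ k`, whose generating function is `∏_{j ≤ k} (1 - q^j)^{-1}`.
-/

open PowerSeries

/-- The partition generating function `Σ_{n≥0} p(n) qⁿ ∈ ℤ⟦q⟧`. -/
noncomputable def partitionGF : PowerSeries ℤ :=
  PowerSeries.mk fun n => (Fintype.card (Nat.Partition n) : ℤ)

/-- The inverse `(1 + q^j)⁻¹ ∈ ℤ⟦q⟧` (for `j ≥ 1` the constant term is `1`, a unit). -/
noncomputable def onePlusXInv (j : ℕ) : PowerSeries ℤ :=
  PowerSeries.invOfUnit (1 + PowerSeries.X ^ j) 1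

/-- The `k`-th summand `q^{k²} ∏_{j=1}^{k} (1+q^j)^{-2}` of the mock theta function
`f(q)`; the `k = 0` summand is the leading term `1`. -/
noncomputable def mockThetaTerm (k : ℕ) : PowerSeries ℤ :=
  PowerSeries.X ^ (k ^ 2) * ∏ j ∈ Finset.Icc 1 k, (onePlusXInv j) ^ 2

/-- Ramanujan's third order mock theta function
`f(q) = 1 + Σ_{k≥1} q^{k²} ∏_{j=1}^{k}(1+q^j)^{-2} ∈ ℤ⟦q⟧`.  The sum converges
q-adically since the `k`-th summand lies in `q^{k²}·ℤ⟦q⟧`, so the `n`-th coefficient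
is the (finite) sum of the `n`-th coefficients of the summands with `k ≤ n`. -/
noncomputable def mockThetaF : PowerSeries ℤ :=
  PowerSeries.mk fun n =>
    ∑ k ∈ Finset.range (n + 1), (PowerSeries.coeff (R := ℤ) n) (mockThetaTerm k)

open Finset

namespace Multiset

theorem card_filter_le_eq_card_filter_lt_add_count (k : ℕ) (s : Multiset ℕ) :
    (s.filter (k ≤ ·)).card = (s.filter (k < ·)).card + s.count k := by
  have hdisj : ∀ a ∈ s, ¬(k < a ∧ k = a) := fun _ _ h ↦ h.1.ne h.2
  rw [count_eq_card_filter_eq, ← card_add, filter_add_filter, filter_eq_nil.mpr hdisj, add_zero]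
  congr 1
  exact filter_congr fun a _ ↦ le_iff_lt_or_eq

end Multiset

namespace YoungDiagram

theorem sum_rowLens (μ : YoungDiagram) : μ.rowLens.sum = μ.card := by
  have hrow : ∀ c ∈ μ.cells, c.1 ∈ range (μ.colLen 0) := fun c hc ↦ by
    rw [mem_range, ← mem_iff_lt_colLen]
    exact μ.up_left_mem le_rfl c.2.zero_le ((mem_cells c).mp hc)
  calc μ.rowLens.sum = ∑ i ∈ range (μ.colLen 0), μ.rowLen i := rfl
    _ = μ.card := by
      rw [YoungDiagram.card, card_eq_sum_card_fiberwise hrow]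
      exact sum_congr rfl fun i _ ↦ μ.rowLen_eq_card

theorem card_transpose (μ : YoungDiagram) : μ.transpose.card = μ.card :=
  card_map _

theorem forall_mem_rowLens_le_iff {μ : YoungDiagram} {k : ℕ} :
    (∀ a ∈ μ.rowLens, a ≤ k) ↔ μ.rowLen 0 ≤ k := by
  simp only [rowLens, List.mem_map, List.mem_range, forall_exists_index, and_imp,
    forall_apply_eq_imp_iff₂]
  refine ⟨fun h ↦ ?_, fun h i _ ↦ (μ.rowLen_anti 0 i i.zero_le).trans h⟩
  rcases (μ.colLen 0).eq_zero_or_pos with h0 | hpos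
  · have : (0, 0) ∉ μ := by rw [mem_iff_lt_colLen, h0]; exact lt_irrefl 0
    rw [mem_iff_lt_rowLen, not_lt, nonpos_iff_eq_zero] at this
    rw [this]; exact k.zero_le
  · exact h 0 hpos

end YoungDiagram

namespace Nat.Partition

variable {n k : ℕ}

def toYoungDiagram (p : n.Partition) : YoungDiagram :=
  .ofRowLens (p.parts.sort (· ≥ ·)) (Multiset.pairwise_sort _ _).sortedGE

theorem coe_rowLens_toYoungDiagram (p : n.Partition) :
    (p.toYoungDiagram.rowLens : Multiset ℕ) = p.parts := by
  rw [toYoungDiagram, YoungDiagram.rowLens_ofRowLens_eq_self fun x hx ↦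
    p.parts_pos ((Multiset.mem_sort _).mp hx), Multiset.sort_eq]

theorem card_toYoungDiagram (p : n.Partition) : p.toYoungDiagram.card = n := by
  rw [← YoungDiagram.sum_rowLens, ← Multiset.sum_coe, coe_rowLens_toYoungDiagram, p.parts_sum]

theorem card_parts_eq_colLen_toYoungDiagram (p : n.Partition) :
    p.parts.card = p.toYoungDiagram.colLen 0 := by
  rw [← coe_rowLens_toYoungDiagram, Multiset.coe_card, YoungDiagram.length_rowLens]

theorem forall_mem_parts_le_iff (p : n.Partition) :
    (∀ i ∈ p.parts, i ≤ k) ↔ p.toYoungDiagram.rowLen 0 ≤ k := by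
  rw [← YoungDiagram.forall_mem_rowLens_le_iff, ← coe_rowLens_toYoungDiagram]
  rfl

def conj (p : n.Partition) : n.Partition where
  parts := p.toYoungDiagram.transpose.rowLens
  parts_pos hi := p.toYoungDiagram.transpose.pos_of_mem_rowLens _ (Multiset.mem_coe.mp hi)
  parts_sum := by
    rw [Multiset.sum_coe, YoungDiagram.sum_rowLens, YoungDiagram.card_transpose,
      card_toYoungDiagram]

theorem toYoungDiagram_conj (p : n.Partition) :
    p.conj.toYoungDiagram = p.toYoungDiagram.transpose := by
  have hsort : p.conj.parts.sort (· ≥ ·) = p.toYoungDiagram.transpose.rowLens :=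
    List.Perm.eq_of_sortedGE (Multiset.pairwise_sort _ _).sortedGE
      (YoungDiagram.rowLens_sorted _) (Multiset.coe_eq_coe.mp (Multiset.sort_eq _ _))
  conv_rhs => rw [← YoungDiagram.ofRowLens_to_rowLens_eq_self (μ := p.toYoungDiagram.transpose)]
  simp only [toYoungDiagram, hsort]

theorem conj_conj (p : n.Partition) : p.conj.conj = p := by
  ext1
  rw [← coe_rowLens_toYoungDiagram p, ← YoungDiagram.transpose_transpose p.toYoungDiagram,
    ← toYoungDiagram_conj]
  rfl

theorem forall_mem_parts_conj_le_iff (p : n.Partition) :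
    (∀ i ∈ p.conj.parts, i ≤ k) ↔ p.parts.card ≤ k := by
  rw [forall_mem_parts_le_iff, toYoungDiagram_conj, YoungDiagram.rowLen_transpose,
    ← card_parts_eq_colLen_toYoungDiagram]

theorem card_filter_card_parts_le :
    #{p : n.Partition | p.parts.card ≤ k} = #(restricted n (· ≤ k)) := by
  refine card_nbij' conj conj (fun p hp ↦ ?_) (fun p hp ↦ ?_) (fun p _ ↦ conj_conj p)
    (fun p _ ↦ conj_conj p)
  · simpa [restricted, forall_mem_parts_conj_le_iff] using hp
  · simpa [restricted, ← forall_mem_parts_conj_le_iff, conj_conj] using hp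

theorem card_parts_le (p : n.Partition) : p.parts.card ≤ n := by
  simpa [p.parts_sum] using Multiset.card_nsmul_le_sum fun _ hx ↦ p.parts_pos hx

noncomputable def durfeeSide (p : n.Partition) : ℕ :=
  Nat.findGreatest (fun i ↦ i ≤ (p.parts.filter (i ≤ ·)).card) n

theorem durfeeSide_eq_iff {p : n.Partition} :
    p.durfeeSide = k ↔ k ≤ (p.parts.filter (k ≤ ·)).card ∧ (p.parts.filter (k < ·)).card ≤ k := by
  have hanti : ∀ {i j}, i ≤ j → (p.parts.filter (j ≤ ·)).card ≤ (p.parts.filter (i ≤ ·)).card :=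
    fun hij ↦ Multiset.card_le_card (Multiset.monotone_filter_right _ fun _ h ↦ hij.trans h)
  have hbound : ∀ i, (p.parts.filter (i ≤ ·)).card ≤ n :=
    fun i ↦ (Multiset.card_le_card (Multiset.filter_le _ _)).trans p.card_parts_le
  rw [durfeeSide, Nat.findGreatest_eq_iff]
  constructor
  · rintro ⟨-, hk, hgt⟩
    refine ⟨?_, not_lt.mp fun hlt ↦ hgt (lt_add_one k) ?_ hlt⟩
    · rcases k.eq_zero_or_pos with rfl | hpos
      · exact Nat.zero_le _
      · exact hk hpos.ne'
    · exact hlt.trans_le (hbound _)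
  · rintro ⟨hk, hlt⟩
    refine ⟨hk.trans (hbound k), fun _ ↦ hk, fun m hkm _ hm ↦ ?_⟩
    have : (p.parts.filter (m ≤ ·)).card ≤ (p.parts.filter (k < ·)).card := hanti hkm
    omega

def durfeeRight (k : ℕ) (s : Multiset ℕ) : Multiset ℕ :=
  (s.filter (k < ·)).map (· - k)

-- The rows of the Durfee square with no cells to its right are parts equal to `k`.
def durfeeBelow (k : ℕ) (s : Multiset ℕ) : Multiset ℕ :=
  s.filter (· ≤ k) - .replicate (k - (s.filter (k < ·)).card) k

def durfeeGlue (k : ℕ) (a b : Multiset ℕ) : Multiset ℕ :=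
  a.map (· + k) + .replicate (k - a.card) k + b

section

variable {a b : Multiset ℕ}

theorem filter_lt_durfeeGlue (ha : ∀ x ∈ a, 0 < x) (hb : ∀ x ∈ b, x ≤ k) :
    (durfeeGlue k a b).filter (k < ·) = a.map (· + k) := by
  rw [durfeeGlue, Multiset.filter_add, Multiset.filter_add, Multiset.filter_eq_self.mpr,
    Multiset.filter_eq_nil.mpr, Multiset.filter_eq_nil.mpr, add_zero, add_zero]
  · exact fun x hx ↦ (hb x hx).not_gt
  · exact fun x hx ↦ (Multiset.eq_of_mem_replicate hx).not_gt
  · simpa using ha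

theorem filter_le_durfeeGlue (ha : ∀ x ∈ a, 0 < x) (hb : ∀ x ∈ b, x ≤ k) :
    (durfeeGlue k a b).filter (· ≤ k) = .replicate (k - a.card) k + b := by
  rw [durfeeGlue, Multiset.filter_add, Multiset.filter_add, Multiset.filter_eq_nil.mpr,
    Multiset.filter_eq_self.mpr, Multiset.filter_eq_self.mpr, zero_add]
  · exact hb
  · exact fun x hx ↦ (Multiset.eq_of_mem_replicate hx).le
  · simpa using ha

theorem durfeeRight_durfeeGlue (ha : ∀ x ∈ a, 0 < x) (hb : ∀ x ∈ b, x ≤ k) :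
    durfeeRight k (durfeeGlue k a b) = a := by
  simp [durfeeRight, filter_lt_durfeeGlue ha hb]

theorem durfeeBelow_durfeeGlue (ha : ∀ x ∈ a, 0 < x) (hb : ∀ x ∈ b, x ≤ k) :
    durfeeBelow k (durfeeGlue k a b) = b := by
  rw [durfeeBelow, filter_lt_durfeeGlue ha hb, filter_le_durfeeGlue ha hb, Multiset.card_map,
    add_tsub_cancel_left]

theorem sum_durfeeGlue (ha : a.card ≤ k) : (durfeeGlue k a b).sum = a.sum + b.sum + k * k := by
  obtain ⟨d, hd⟩ := Nat.exists_eq_add_of_le ha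
  simp only [durfeeGlue, hd, add_tsub_cancel_left, Multiset.sum_add, Multiset.sum_map_add,
    Multiset.map_id', Multiset.map_const', Multiset.sum_replicate, smul_eq_mul]
  ring

end

theorem durfeeGlue_durfeeRight_durfeeBelow {s : Multiset ℕ} (hs : k ≤ (s.filter (k ≤ ·)).card) :
    durfeeGlue k (durfeeRight k s) (durfeeBelow k s) = s := by
  have hright : (durfeeRight k s).map (· + k) = s.filter (k < ·) := by
    rw [durfeeRight, Multiset.map_map]
    refine (Multiset.map_congr rfl fun x hx ↦ ?_).trans (Multiset.map_id _)
    exact Nat.sub_add_cancel (Multiset.of_mem_filter hx).le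
  have hsquare : .replicate (k - (s.filter (k < ·)).card) k ≤ s.filter (· ≤ k) := by
    rw [← Multiset.le_count_iff_replicate_le, Multiset.count_filter_of_pos (p := (· ≤ k)) le_rfl]
    have := Multiset.card_filter_le_eq_card_filter_lt_add_count k s
    omega
  have hsplit : s.filter (k < ·) + s.filter (· ≤ k) = s := by
    simpa only [not_lt] using Multiset.filter_add_not (k < ·) s
  rw [durfeeGlue, hright, durfeeRight, Multiset.card_map, add_assoc, durfeeBelow,
    add_tsub_cancel_of_le hsquare, hsplit]

theorem pos_of_mem_durfeeRight {s : Multiset ℕ} {x : ℕ} (hx : x ∈ durfeeRight k s) : 0 < x := by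
  obtain ⟨y, hy, rfl⟩ := Multiset.mem_map.mp hx
  exact Nat.sub_pos_of_lt (Multiset.of_mem_filter hy)

theorem mem_of_mem_durfeeBelow {s : Multiset ℕ} {x : ℕ} (hx : x ∈ durfeeBelow k s) : x ∈ s :=
  Multiset.mem_of_mem_filter (Multiset.mem_of_le tsub_le_self hx)

theorem le_of_mem_durfeeBelow {s : Multiset ℕ} {x : ℕ} (hx : x ∈ durfeeBelow k s) : x ≤ k :=
  Multiset.of_mem_filter (p := (· ≤ k)) (Multiset.mem_of_le tsub_le_self hx)

section

variable {p : n.Partition}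

theorem durfeeGlue_durfeeRight_durfeeBelow_parts (hp : p.durfeeSide = k) :
    durfeeGlue k (durfeeRight k p.parts) (durfeeBelow k p.parts) = p.parts :=
  durfeeGlue_durfeeRight_durfeeBelow (durfeeSide_eq_iff.mp hp).1

theorem card_durfeeRight_le (hp : p.durfeeSide = k) : (durfeeRight k p.parts).card ≤ k := by
  rw [durfeeRight, Multiset.card_map]
  exact (durfeeSide_eq_iff.mp hp).2

theorem sum_durfeeRight_add_sum_durfeeBelow (hp : p.durfeeSide = k) :
    (durfeeRight k p.parts).sum + (durfeeBelow k p.parts).sum + k * k = n := by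
  rw [← sum_durfeeGlue (card_durfeeRight_le hp), durfeeGlue_durfeeRight_durfeeBelow_parts hp,
    p.parts_sum]

end

theorem durfeeSide_mul_self_le (p : n.Partition) : p.durfeeSide * p.durfeeSide ≤ n := by
  have := sum_durfeeRight_add_sum_durfeeBelow (p := p) rfl
  omega

section

variable {u v : ℕ} {a : u.Partition} {b : v.Partition}

def ofDurfeeGlue (a : u.Partition) (b : v.Partition) (hn : u + v + k * k = n)
    (ha : a.parts.card ≤ k) : n.Partition where
  parts := durfeeGlue k a.parts b.parts
  parts_pos hx := by
    simp only [durfeeGlue, Multiset.mem_add, Multiset.mem_map, Multiset.mem_replicate] at hx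
    rcases hx with (⟨y, hy, rfl⟩ | ⟨hk, rfl⟩) | hx
    · exact Nat.add_pos_left (a.parts_pos hy) k
    · omega
    · exact b.parts_pos hx
  parts_sum := by rw [sum_durfeeGlue ha, a.parts_sum, b.parts_sum, hn]

theorem durfeeSide_ofDurfeeGlue (hn : u + v + k * k = n) (ha : a.parts.card ≤ k)
    (hb : ∀ x ∈ b.parts, x ≤ k) : (ofDurfeeGlue a b hn ha).durfeeSide = k := by
  have hright := filter_lt_durfeeGlue (fun _ hx ↦ a.parts_pos hx) hb
  have hsquare : k - a.parts.card ≤ (durfeeGlue k a.parts b.parts).count k := by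
    rw [durfeeGlue, Multiset.count_add, Multiset.count_add, Multiset.count_replicate_self]
    omega
  have := Multiset.card_filter_le_eq_card_filter_lt_add_count k (durfeeGlue k a.parts b.parts)
  rw [hright, Multiset.card_map] at this
  refine durfeeSide_eq_iff.mpr ⟨?_, ?_⟩
  · change k ≤ ((durfeeGlue k a.parts b.parts).filter (k ≤ ·)).card
    omega
  · change ((durfeeGlue k a.parts b.parts).filter (k < ·)).card ≤ k
    rwa [hright, Multiset.card_map]

theorem card_filter_durfeeSide_eq_and_sums_eq (hn : u + v + k * k = n) :
    #{p : n.Partition | p.durfeeSide = k ∧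
        (durfeeRight k p.parts).sum = u ∧ (durfeeBelow k p.parts).sum = v} =
      #{a : u.Partition | a.parts.card ≤ k} * #(restricted v (· ≤ k)) := by
  have hpair : ∀ ab, ab ∈ ({a : u.Partition | a.parts.card ≤ k} : Finset _) ×ˢ
      restricted v (· ≤ k) ↔ ab.1.parts.card ≤ k ∧ ∀ x ∈ ab.2.parts, x ≤ k := by
    simp [restricted]
  rw [← card_product]
  refine card_bij'
    (fun p hp ↦ (⟨durfeeRight k p.parts, pos_of_mem_durfeeRight, (mem_filter.mp hp).2.2.1⟩,
      ⟨durfeeBelow k p.parts, fun hx ↦ p.parts_pos (mem_of_mem_durfeeBelow hx),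
        (mem_filter.mp hp).2.2.2⟩))
    (fun ab hab ↦ ofDurfeeGlue ab.1 ab.2 hn ((hpair ab).mp hab).1)
    (fun p hp ↦ (hpair _).mpr ⟨card_durfeeRight_le (mem_filter.mp hp).2.1,
      fun _ ↦ le_of_mem_durfeeBelow⟩)
    (fun ab hab ↦ ?_)
    (fun p hp ↦ Nat.Partition.ext
      (durfeeGlue_durfeeRight_durfeeBelow_parts (mem_filter.mp hp).2.1))
    (fun ab hab ↦ ?_)
  all_goals
    obtain ⟨ha, hb⟩ := (hpair ab).mp hab
    have hpos : ∀ x ∈ ab.1.parts, 0 < x := fun _ hx ↦ ab.1.parts_pos hx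
  · refine mem_filter.mpr ⟨mem_univ _, durfeeSide_ofDurfeeGlue hn ha hb, ?_, ?_⟩
    · exact (congrArg Multiset.sum (durfeeRight_durfeeGlue hpos hb)).trans ab.1.parts_sum
    · exact (congrArg Multiset.sum (durfeeBelow_durfeeGlue hpos hb)).trans ab.2.parts_sum
  · exact Prod.ext (Nat.Partition.ext (durfeeRight_durfeeGlue hpos hb))
      (Nat.Partition.ext (durfeeBelow_durfeeGlue hpos hb))

end

theorem card_filter_durfeeSide_eq (hk : k * k ≤ n) :
    #{p : n.Partition | p.durfeeSide = k} = ∑ uv ∈ antidiagonal (n - k * k),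
      #{a : uv.1.Partition | a.parts.card ≤ k} * #(restricted uv.2 (· ≤ k)) := by
  have hmaps : ∀ p ∈ ({p : n.Partition | p.durfeeSide = k} : Finset _),
      ((durfeeRight k p.parts).sum, (durfeeBelow k p.parts).sum) ∈ antidiagonal (n - k * k) :=
    fun p hp ↦ by
      have := sum_durfeeRight_add_sum_durfeeBelow (mem_filter.mp hp).2
      rw [HasAntidiagonal.mem_antidiagonal]
      omega
  rw [card_eq_sum_card_fiberwise hmaps]
  refine sum_congr rfl fun uv huv ↦ ?_
  rw [HasAntidiagonal.mem_antidiagonal] at huv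
  rw [← card_filter_durfeeSide_eq_and_sums_eq (n := n) (by omega), filter_filter]
  simp only [Prod.ext_iff]

noncomputable def partsLeGenFun (R : Type*) [CommSemiring R] (k : ℕ) : R⟦X⟧ :=
  PowerSeries.mk fun n ↦ (#(restricted n (· ≤ k)) : R)

open scoped PowerSeries.WithPiTopology in
theorem partsLeGenFun_mul_prod_one_sub_X_pow (R : Type*) [CommRing R] (k : ℕ) :
    partsLeGenFun R k * ∏ j ∈ Icc 1 k, (1 - X ^ j) = 1 := by
  -- The identity is algebraic; any topology on `R` lets us use the infinite product formula.
  let _ : TopologicalSpace R := ⊥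
  have _ : DiscreteTopology R := ⟨rfl⟩
  rw [partsLeGenFun, powerSeriesMk_card_restricted_eq_tprod R (· ≤ k),
    tprod_eq_prod (s := range k) fun i hi ↦ if_neg (by simpa using hi),
    ← Ico_add_one_right_eq_Icc, prod_Ico_eq_prod_range, add_tsub_cancel_right, ← prod_mul_distrib]
  refine prod_eq_one fun i hi ↦ ?_
  rw [if_pos (by simpa using hi), add_comm 1 i]
  simp_rw [pow_mul]
  exact PowerSeries.WithPiTopology.tsum_pow_mul_one_sub_of_constantCoeff_eq_zero (by simp)

theorem card_eq_sum_coeff_X_pow_sq_mul_partsLeGenFun_sq (R : Type*) [CommSemiring R] (n : ℕ) :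
    (Fintype.card n.Partition : R) =
      ∑ k ∈ range (n + 1), coeff n (X ^ (k ^ 2) * partsLeGenFun R k ^ 2) := by
  have hside : ∀ p ∈ (univ : Finset n.Partition), p.durfeeSide ∈ range (n + 1) :=
    fun p _ ↦ mem_range.mpr (Nat.lt_succ_of_le (Nat.findGreatest_le n))
  rw [← Finset.card_univ, card_eq_sum_card_fiberwise hside, Nat.cast_sum]
  refine sum_congr rfl fun k _ ↦ ?_
  rw [coeff_X_pow_mul', sq k]
  split_ifs with hk
  · rw [card_filter_durfeeSide_eq hk, sq, coeff_mul, Nat.cast_sum]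
    refine sum_congr rfl fun uv _ ↦ ?_
    rw [card_filter_card_parts_le, partsLeGenFun, coeff_mk, coeff_mk, Nat.cast_mul]
  · have hempty : ({p : n.Partition | p.durfeeSide = k} : Finset _) = ∅ :=
      filter_eq_empty_iff.mpr fun p _ hp ↦ hk (hp ▸ p.durfeeSide_mul_self_le)
    rw [hempty, Finset.card_empty, Nat.cast_zero]

end Nat.Partition

theorem PowerSeries.one_add_X_pow_sq_eq_one_sub_X_pow_sq {R : Type*} [CommRing R]
    (h4 : (4 : R) = 0) (j : ℕ) :
    ((1 + X ^ j) ^ 2 : R⟦X⟧) = (1 - X ^ j) ^ 2 := by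
  have : (4 : R⟦X⟧) = 0 := by simpa [map_ofNat] using congrArg (C (R := R)) h4
  linear_combination X ^ j * this

theorem one_add_X_pow_mul_onePlusXInv {j : ℕ} (hj : j ≠ 0) : (1 + X ^ j) * onePlusXInv j = 1 :=
  mul_invOfUnit _ _ (by simp [zero_pow hj])

theorem map_mockThetaTerm_of_four_eq_zero {R : Type*} [CommRing R] (h4 : (4 : R) = 0) (k : ℕ) :
    map (Int.castRingHom R) (mockThetaTerm k) =
      X ^ (k ^ 2) * Nat.Partition.partsLeGenFun R k ^ 2 := by
  rw [mockThetaTerm, map_mul, map_pow, map_X]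
  congr 1
  -- Both sides are inverse to `∏ (1 - X^j)^2`, which equals `∏ (1 + X^j)^2` because `4 = 0`.
  refine inv_unique (x := ∏ j ∈ Icc 1 k, (1 - X ^ j : R⟦X⟧) ^ 2) ?_ ?_
  · rw [map_prod, ← prod_mul_distrib]
    refine prod_eq_one fun j hj ↦ ?_
    rw [← one_add_X_pow_sq_eq_one_sub_X_pow_sq h4, map_pow, ← mul_pow]
    have h := congrArg (map (Int.castRingHom R))
      (one_add_X_pow_mul_onePlusXInv (j := j) (by grind))
    rw [map_mul, map_add, map_pow, map_X, map_one] at h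
    rw [h, one_pow]
  · rw [prod_pow, ← mul_pow, mul_comm, Nat.Partition.partsLeGenFun_mul_prod_one_sub_X_pow, one_pow]

theorem partition_congruent_mockTheta_mod_four :
    ∀ n : ℕ, (PowerSeries.coeff (R := ℤ) n) partitionGF ≡ (PowerSeries.coeff (R := ℤ) n) mockThetaF [ZMOD 4] := by
  intro n
  refine (ZMod.intCast_eq_intCast_iff _ _ 4).mp ?_
  rw [partitionGF, mockThetaF, coeff_mk, coeff_mk, Int.cast_natCast,
    Nat.Partition.card_eq_sum_coeff_X_pow_sq_mul_partsLeGenFun_sq, Int.cast_sum]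
  refine sum_congr rfl fun k _ ↦ ?_
  rw [← map_mockThetaTerm_of_four_eq_zero (by decide), coeff_map, eq_intCast]
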